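/- Suppose F̄(x;λ) is increasing and concave in λ for each x ≥ 0, and the survival copula C_R is Schur-concave. If ∏ᵢ p*ᵢ ≤ ∏ᵢ pᵢ and (λ₁,…,λₙ) is weakly supermajorized by (λ*₁,…,λ*ₙ), then Y*_{1:n} ≤_st Y_{1:n}, i.e., (∏ᵢ p*ᵢ) C_R(F̄(x;λ*₁),…,F̄(x;λ*ₙ)) ≤ (∏ᵢ pᵢ) C_R(F̄(x;λ₁),…,F̄(x;λₙ)) for all x ≥ 0. -/

import Mathlib

open Finset

/-- Sum of the `j` smallest entries of `x`. -/
noncomputable def sumSmallest {n : ℕ} (j : ℕ) (x : Fin n → ℝ) : ℝ :=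
  sInf ((fun s : Finset (Fin n) => ∑ i ∈ s, x i) '' {s : Finset (Fin n) | s.card = j})

/-- `x` is weakly supermajorized by `y` (`x ≼^w y`). -/
def WeakSupermajorized {n : ℕ} (x y : Fin n → ℝ) : Prop :=
  ∀ j : ℕ, 1 ≤ j → j ≤ n → sumSmallest j y ≤ sumSmallest j x

/-- `x` is majorized by `y`. -/
def Majorized {n : ℕ} (x y : Fin n → ℝ) : Prop :=
  (∑ i, x i = ∑ i, y i) ∧
    ∀ j : ℕ, 1 ≤ j → j ≤ n - 1 → sumSmallest j y ≤ sumSmallest j x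

/-- `C` is Schur-concave. -/
def SchurConcave {n : ℕ} (C : (Fin n → ℝ) → ℝ) : Prop :=
  ∀ u v : Fin n → ℝ, Majorized u v → C v ≤ C u

/-!
For fixed `x ≥ 0` the map `g = F̄(x, ·)` is increasing and concave. Weak supermajorization
`λ ≼^w λ*` therefore passes to `g(λ) ≼^w g(λ*)`: bound `g(λ*₍ᵢ₎)` by the tangent line of `g` at
`λ₍ᵢ₎` (sorted entries) and sum by parts, the slopes being nonnegative and decreasing. Clipping
`g(λ)` at the level `t` with `∑ min(g(λᵢ), t) = ∑ g(λ*ᵢ)` gives a vector `u ≤ g(λ)` majorized by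
`g(λ*)`, so Schur-concavity and monotonicity of `C_R` give `C_R(g(λ*)) ≤ C_R(u) ≤ C_R(g(λ))`, and
`∏ p*ᵢ ≤ ∏ pᵢ` finishes.
-/

theorem Finset.sum_le_sum_of_card_eq_of_forall_le {ι M : Type*} [AddCommMonoid M] [LinearOrder M]
    [IsOrderedAddMonoid M] {f : ι → M} {s t : Finset ι}
    (hcard : s.card = t.card) (h : ∀ i ∈ s, ∀ j ∈ t, f i ≤ f j) :
    ∑ i ∈ s, f i ≤ ∑ j ∈ t, f j := by
  rcases s.eq_empty_or_nonempty with rfl | hs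
  · rw [eq_comm, card_empty, card_eq_zero] at hcard
    simp [hcard]
  calc ∑ i ∈ s, f i ≤ s.card • s.sup' hs f := sum_le_card_nsmul _ _ _ fun i hi ↦ le_sup' f hi
    _ = t.card • s.sup' hs f := by rw [hcard]
    _ ≤ ∑ j ∈ t, f j := card_nsmul_le_sum _ _ _ fun j hj ↦ sup'_le hs f fun i hi ↦ h i hi j hj

theorem Finset.sum_range_mul_nonneg_of_antitoneOn {c d : ℕ → ℝ} {k : ℕ}
    (hc : AntitoneOn c (Set.Iio k)) (hc0 : ∀ i < k, 0 ≤ c i)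
    (hd : ∀ j ≤ k, 0 ≤ ∑ i ∈ range j, d i) : 0 ≤ ∑ i ∈ range k, c i * d i := by
  rcases Nat.eq_zero_or_pos k with rfl | hk
  · simp
  have hparts := sum_range_by_parts c d k
  simp only [smul_eq_mul] at hparts
  rw [hparts]
  have hlast : 0 ≤ c (k - 1) * ∑ i ∈ range k, d i := mul_nonneg (hc0 _ (by omega)) (hd k le_rfl)
  have hsteps : ∑ i ∈ range (k - 1), (c (i + 1) - c i) * ∑ j ∈ range (i + 1), d j ≤ 0 := by
    refine sum_nonpos fun i hi ↦ ?_
    have hi : i + 1 < k := by have := mem_range.1 hi; omega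
    exact mul_nonpos_of_nonpos_of_nonneg (sub_nonpos.2 (hc (show i < k by omega) hi i.le_succ))
      (hd _ hi.le)
  linarith

theorem Finset.sum_Ico_nonpos_of_antitoneOn {d : ℕ → ℝ} {m k n : ℕ}
    (hd : AntitoneOn d (Set.Ico m n)) (hmk : m ≤ k) (h : ∑ i ∈ Ico m n, d i ≤ 0) :
    ∑ i ∈ Ico k n, d i ≤ 0 := by
  by_cases hall : ∀ i ∈ Ico k n, d i ≤ 0
  · exact sum_nonpos hall
  push Not at hall
  obtain ⟨j, hj, hdj⟩ := hall
  rw [mem_Ico] at hj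
  have hhead : 0 ≤ ∑ i ∈ Ico m k, d i := sum_nonneg fun i hi ↦ by
    rw [mem_Ico] at hi
    exact hdj.le.trans (hd ⟨hi.1, by omega⟩ ⟨by omega, hj.2⟩ (by omega))
  rw [← sum_Ico_consecutive d hmk (hj.1.trans hj.2.le)] at h
  linarith

theorem exists_sum_min_eq {ι : Type*} [Fintype ι] {a b : ι → ℝ} (h : ∑ i, b i ≤ ∑ i, a i) :
    ∃ t, ∑ i, min (a i) t = ∑ i, b i := by
  set φ : ℝ → ℝ := fun t ↦ ∑ i, min (a i) t
  have hφ : Continuous φ := continuous_finsetSum _ fun i _ ↦ continuous_const.min continuous_id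
  have hlow : φ (-∑ i, |b i|) ≤ ∑ i, b i := sum_le_sum fun i _ ↦ (min_le_right _ _).trans <|
    (neg_le_neg (single_le_sum (fun j _ ↦ abs_nonneg (b j)) (mem_univ i))).trans (neg_abs_le (b i))
  have hhigh : φ (∑ i, |a i|) = ∑ i, a i := sum_congr rfl fun i _ ↦
    min_eq_left <|
      (le_abs_self (a i)).trans (single_le_sum (fun j _ ↦ abs_nonneg (a j)) (mem_univ i))
  exact intermediate_value_univ _ _ hφ ⟨hlow, hhigh ▸ h⟩

namespace ConcaveOn

open Set

variable {g : ℝ → ℝ}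

theorem antitone_rightDeriv (hg : ConcaveOn ℝ univ g) :
    Antitone fun x ↦ derivWithin g (Ioi x) x := fun x y hxy ↦ by
  have := hg.neg.monotoneOn_rightDeriv (by simp : x ∈ interior univ)
    (by simp : y ∈ interior univ) hxy
  simpa only [derivWithin.neg, neg_le_neg_iff] using this

theorem le_add_rightDeriv_mul (hg : ConcaveOn ℝ univ g) (x y : ℝ) :
    g y ≤ g x + derivWithin g (Ioi x) x * (y - x) := by
  have hx : x ∈ interior (univ : Set ℝ) := by simp
  rcases lt_trichotomy x y with hxy | rfl | hyx
  · have := hg.neg.rightDeriv_le_slope_of_mem_interior hx (mem_univ y) hxy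
    rw [derivWithin.neg, slope_def_field, le_div_iff₀ (sub_pos.2 hxy)] at this
    simp only [Pi.neg_apply] at this
    linarith
  · simp
  · have := (hg.neg.slope_le_leftDeriv_of_mem_interior (mem_univ y) hx hyx).trans
      (hg.neg.leftDeriv_le_rightDeriv_of_mem_interior hx)
    rw [derivWithin.neg, slope_def_field, div_le_iff₀ (sub_pos.2 hyx)] at this
    simp only [Pi.neg_apply] at this
    linarith

end ConcaveOn

theorem sum_range_comp_le_of_concaveOn {g : ℝ → ℝ} (hgm : Monotone g)
    (hgc : ConcaveOn ℝ Set.univ g) {a b : ℕ → ℝ} {k : ℕ} (ha : MonotoneOn a (Set.Iio k))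
    (hab : ∀ j ≤ k, ∑ i ∈ range j, b i ≤ ∑ i ∈ range j, a i) :
    ∑ i ∈ range k, g (b i) ≤ ∑ i ∈ range k, g (a i) := by
  set D : ℕ → ℝ := fun i ↦ derivWithin g (Set.Ioi (a i)) (a i)
  have habel : 0 ≤ ∑ i ∈ range k, D i * (a i - b i) := by
    refine sum_range_mul_nonneg_of_antitoneOn
      (fun i hi j hj hij ↦ hgc.antitone_rightDeriv (ha hi hj hij))
      (fun i _ ↦ (hgm.monotoneOn _).derivWithin_nonneg) fun j hj ↦ ?_
    rw [sum_sub_distrib, sub_nonneg]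
    exact hab j hj
  calc ∑ i ∈ range k, g (b i) ≤ ∑ i ∈ range k, (g (a i) + D i * (b i - a i)) :=
        sum_le_sum fun i _ ↦ hgc.le_add_rightDeriv_mul (a i) (b i)
    _ = ∑ i ∈ range k, g (a i) - ∑ i ∈ range k, D i * (a i - b i) := by
        rw [← sum_sub_distrib]
        exact sum_congr rfl fun i _ ↦ by ring
    _ ≤ ∑ i ∈ range k, g (a i) := sub_le_self _ habel

theorem sum_range_le_sum_range_min {a b : ℕ → ℝ} {n : ℕ} {t : ℝ}
    (ha : MonotoneOn a (Set.Iio n)) (hb : MonotoneOn b (Set.Iio n))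
    (hab : ∀ j ≤ n, ∑ i ∈ range j, b i ≤ ∑ i ∈ range j, a i)
    (ht : ∑ i ∈ range n, min (a i) t = ∑ i ∈ range n, b i) {k : ℕ} (hk : k ≤ n) :
    ∑ i ∈ range k, b i ≤ ∑ i ∈ range k, min (a i) t := by
  have hprefix : ∀ j ≤ n, (∀ i < j, a i ≤ t) →
      ∑ i ∈ range j, b i ≤ ∑ i ∈ range j, min (a i) t := fun j hj hjt ↦
    (hab j hj).trans_eq <| sum_congr rfl fun i hi ↦ (min_eq_left (hjt i (mem_range.1 hi))).symm
  by_cases hall : ∀ i < k, a i ≤ t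
  · exact hprefix k hk hall
  push Not at hall
  classical
  set m := Nat.find hall
  obtain ⟨hmk, hm⟩ : m < k ∧ t < a m := Nat.find_spec hall
  have hclip : ∀ i ∈ Set.Ico m n, min (a i) t = t := fun i hi ↦
    min_eq_right (hm.le.trans (ha (Set.mem_Iio.2 (by omega)) hi.2 hi.1))
  set d : ℕ → ℝ := fun i ↦ min (a i) t - b i
  have hd : AntitoneOn d (Set.Ico m n) := fun i hi j hj hij ↦ by
    simp only [d, hclip i hi, hclip j hj]
    linarith [hb hi.2 hj.2 hij]
  have hhead : 0 ≤ ∑ i ∈ range m, d i := by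
    have := hprefix m (by omega) fun i hi ↦
      le_of_not_gt fun hti ↦ Nat.find_min hall hi ⟨by omega, hti⟩
    simpa only [d, sum_sub_distrib, sub_nonneg] using this
  have htotal : ∑ i ∈ range n, d i = 0 := by simp only [d, sum_sub_distrib, ht, sub_self]
  have htail : ∑ i ∈ Ico k n, d i ≤ 0 := by
    refine sum_Ico_nonpos_of_antitoneOn hd hmk.le ?_
    rw [← sum_range_add_sum_Ico d (show m ≤ n by omega)] at htotal
    linarith
  rw [← sum_range_add_sum_Ico d hk] at htotal
  have : 0 ≤ ∑ i ∈ range k, d i := by linarith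
  simpa only [d, sum_sub_distrib, sub_nonneg] using this

theorem Fin.sum_filter_val_lt_eq_sum_range {n j : ℕ} {x : Fin n → ℝ} {s : ℕ → ℝ}
    (hs : ∀ i : Fin n, s i = x i) (hj : j ≤ n) :
    ∑ i ∈ ({i : Fin n | ↑i < j} : Finset (Fin n)), x i = ∑ i ∈ range j, s i := by
  have hmap : ({i : Fin n | ↑i < j} : Finset (Fin n)).map valEmbedding = range j := by
    ext m
    simp only [mem_map, mem_filter, mem_univ, true_and, valEmbedding_apply, mem_range]
    exact ⟨fun ⟨i, hi, him⟩ ↦ him ▸ hi, fun hm ↦ ⟨⟨m, hm.trans_le hj⟩, hm, rfl⟩⟩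
  rw [← hmap, sum_map]
  exact sum_congr rfl fun i _ ↦ (hs i).symm

section SumSmallest

variable {n j : ℕ}

theorem sumSmallest_comp_perm (x : Fin n → ℝ) (σ : Equiv.Perm (Fin n)) (j : ℕ) :
    sumSmallest j (x ∘ σ) = sumSmallest j x := by
  have key : ∀ (y : Fin n → ℝ) (τ : Equiv.Perm (Fin n)),
      (fun s : Finset (Fin n) ↦ ∑ i ∈ s, (y ∘ τ) i) '' {s | s.card = j} ⊆
        (fun s : Finset (Fin n) ↦ ∑ i ∈ s, y i) '' {s | s.card = j} := by
    rintro y τ _ ⟨s, hs, rfl⟩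
    exact ⟨s.map τ.toEmbedding, by simpa using hs, by simp [sum_map]⟩
  refine congrArg sInf (Set.Subset.antisymm (key x σ) ?_)
  simpa [Function.comp_assoc] using key (x ∘ σ) σ.symm

theorem Monotone.sum_filter_val_lt_le_sum {x : Fin n → ℝ} (hx : Monotone x)
    {s : Finset (Fin n)} (hs : s.card = j) :
    ∑ i ∈ ({i : Fin n | ↑i < j} : Finset (Fin n)), x i ≤ ∑ i ∈ s, x i := by
  set P : Finset (Fin n) := {i : Fin n | ↑i < j}
  have hP : P.card = s.card := by
    rw [Fin.card_filter_val_lt, ← hs,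
      min_eq_right (card_le_univ s |>.trans_eq (Fintype.card_fin n))]
  have hexchange : ∑ i ∈ P \ s, x i ≤ ∑ i ∈ s \ P, x i := by
    refine sum_le_sum_of_card_eq_of_forall_le (card_sdiff_comm hP) fun a ha b hb ↦ hx ?_
    simp only [P, mem_sdiff, mem_filter, mem_univ, true_and, not_lt] at ha hb
    exact Fin.le_def.2 (ha.1.le.trans hb.2)
  rw [← sum_inter_add_sum_sdiff P s, ← sum_inter_add_sum_sdiff s P, inter_comm]
  gcongr

theorem Monotone.sumSmallest_eq {x : Fin n → ℝ} (hx : Monotone x) (hj : j ≤ n) :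
    sumSmallest j x = ∑ i ∈ ({i : Fin n | ↑i < j} : Finset (Fin n)), x i := by
  refine IsLeast.csInf_eq ⟨⟨_, ?_, rfl⟩, ?_⟩
  · rw [Set.mem_ofPred_eq, Fin.card_filter_val_lt, min_eq_right hj]
  · rintro _ ⟨s, hs, rfl⟩
    exact hx.sum_filter_val_lt_le_sum hs

theorem sumSmallest_eq_sum_range {x : Fin n → ℝ} {σ : Equiv.Perm (Fin n)} (hσ : Monotone (x ∘ σ))
    {s : ℕ → ℝ} (hs : ∀ i : Fin n, s i = x (σ i)) (hj : j ≤ n) :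
    sumSmallest j x = ∑ i ∈ range j, s i := by
  rw [← sumSmallest_comp_perm x σ, hσ.sumSmallest_eq hj]
  exact Fin.sum_filter_val_lt_eq_sum_range hs hj

end SumSmallest

section Majorization

variable {n : ℕ}

noncomputable def sortedSeq (x : Fin n → ℝ) : ℕ → ℝ :=
  Function.extend Fin.val (x ∘ Tuple.sort x) 0

theorem sortedSeq_apply (x : Fin n → ℝ) (i : Fin n) : sortedSeq x i = x (Tuple.sort x i) :=
  Fin.val_injective.extend_apply _ _ i

theorem monotoneOn_sortedSeq (x : Fin n → ℝ) : MonotoneOn (sortedSeq x) (Set.Iio n) :=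
  fun i hi k hk hik ↦ (sortedSeq_apply x ⟨i, hi⟩).trans_le <|
    (Tuple.monotone_sort x (show (⟨i, hi⟩ : Fin n) ≤ ⟨k, hk⟩ from hik)).trans_eq
      (sortedSeq_apply x ⟨k, hk⟩).symm

theorem sum_range_eq_sum_of_comp_perm {x : Fin n → ℝ} (σ : Equiv.Perm (Fin n)) {s : ℕ → ℝ}
    (hs : ∀ i : Fin n, s i = x (σ i)) : ∑ i ∈ range n, s i = ∑ i, x i := by
  rw [← Fin.sum_univ_eq_sum_range, ← Equiv.sum_comp σ x]
  exact sum_congr rfl fun i _ ↦ hs i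

theorem WeakSupermajorized.sum_range_sortedSeq_le {a b : Fin n → ℝ} (h : WeakSupermajorized a b)
    {j : ℕ} (hj : j ≤ n) : ∑ i ∈ range j, sortedSeq b i ≤ ∑ i ∈ range j, sortedSeq a i := by
  rcases Nat.eq_zero_or_pos j with rfl | hj0
  · simp
  rw [← sumSmallest_eq_sum_range (Tuple.monotone_sort a) (sortedSeq_apply a) hj,
    ← sumSmallest_eq_sum_range (Tuple.monotone_sort b) (sortedSeq_apply b) hj]
  exact h j hj0 hj

theorem WeakSupermajorized.comp_of_concaveOn {a b : Fin n → ℝ} (h : WeakSupermajorized a b)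
    {g : ℝ → ℝ} (hgm : Monotone g) (hgc : ConcaveOn ℝ Set.univ g) :
    WeakSupermajorized (g ∘ a) (g ∘ b) := by
  intro j hj0 hj
  rw [sumSmallest_eq_sum_range (x := g ∘ a) (s := g ∘ sortedSeq a)
      (hgm.comp (Tuple.monotone_sort a)) (fun i ↦ congrArg g (sortedSeq_apply a i)) hj,
    sumSmallest_eq_sum_range (x := g ∘ b) (s := g ∘ sortedSeq b)
      (hgm.comp (Tuple.monotone_sort b)) (fun i ↦ congrArg g (sortedSeq_apply b i)) hj]
  exact sum_range_comp_le_of_concaveOn hgm hgc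
    ((monotoneOn_sortedSeq a).mono (Set.Iio_subset_Iio hj))
    fun k hk ↦ h.sum_range_sortedSeq_le (hk.trans hj)

/-- The witness is `a` clipped at the level `t` where its total drops to that of `b`. -/
theorem WeakSupermajorized.exists_le_majorized {a b : Fin n → ℝ} (h : WeakSupermajorized a b) :
    ∃ u ≤ a, Majorized u b := by
  have hsum : ∑ i, b i ≤ ∑ i, a i := by
    rw [← sum_range_eq_sum_of_comp_perm _ (sortedSeq_apply a),
      ← sum_range_eq_sum_of_comp_perm _ (sortedSeq_apply b)]
    exact h.sum_range_sortedSeq_le le_rfl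
  obtain ⟨t, ht⟩ := exists_sum_min_eq hsum
  have hclip : ∀ i : Fin n, min (sortedSeq a i) t = min (a (Tuple.sort a i)) t :=
    fun i ↦ congrArg (min · t) (sortedSeq_apply a i)
  refine ⟨fun i ↦ min (a i) t, fun i ↦ min_le_left _ _, ht, fun j _ hj ↦ ?_⟩
  have hjn : j ≤ n := hj.trans (Nat.sub_le n 1)
  rw [sumSmallest_eq_sum_range (Tuple.monotone_sort b) (sortedSeq_apply b) hjn,
    sumSmallest_eq_sum_range (x := fun i ↦ min (a i) t) (s := fun i ↦ min (sortedSeq a i) t)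
      (fun i k hik ↦ min_le_min_right t (Tuple.monotone_sort a hik)) hclip hjn]
  refine sum_range_le_sum_range_min (monotoneOn_sortedSeq a) (monotoneOn_sortedSeq b)
    (fun k hk ↦ h.sum_range_sortedSeq_le hk) ?_ hjn
  rw [sum_range_eq_sum_of_comp_perm (x := fun i ↦ min (a i) t) _ hclip,
    sum_range_eq_sum_of_comp_perm _ (sortedSeq_apply b), ht]

end Majorization

theorem SchurConcave.le_of_weakSupermajorized {n : ℕ} {C : (Fin n → ℝ) → ℝ}
    (hS : SchurConcave C) (hC : Monotone C) {a b : Fin n → ℝ} (h : WeakSupermajorized a b) :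
    C b ≤ C a := by
  obtain ⟨u, hua, hu⟩ := h.exists_le_majorized
  exact (hS u b hu).trans (hC hua)

theorem smallest_claim_st_order_parameters_general {n : ℕ}
    (C : (Fin n → ℝ) → ℝ) (Fbar : ℝ → ℝ → ℝ)
    (p pstar lam lamstar : Fin n → ℝ)
    (hpstar : ∀ i, pstar i ∈ Set.Icc (0:ℝ) 1)
    (hFmono : ∀ x : ℝ, 0 ≤ x → Monotone (Fbar x))
    (hFconc : ∀ x : ℝ, 0 ≤ x → ConcaveOn ℝ Set.univ (Fbar x))
    (hCmono : Monotone C) (hCschur : SchurConcave C)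
    (hCrange : ∀ u : Fin n → ℝ, C u ∈ Set.Icc (0:ℝ) 1)
    (hprod : ∏ i, pstar i ≤ ∏ i, p i)
    (hmaj : WeakSupermajorized lam lamstar) :
    ∀ x : ℝ, 0 ≤ x →
      (∏ i, pstar i) * C (fun i => Fbar x (lamstar i)) ≤
        (∏ i, p i) * C (fun i => Fbar x (lam i)) := by
  intro x hx
  have hC : C (fun i => Fbar x (lamstar i)) ≤ C (fun i => Fbar x (lam i)) :=
    hCschur.le_of_weakSupermajorized hCmono (hmaj.comp_of_concaveOn (hFmono x hx) (hFconc x hx))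
  calc (∏ i, pstar i) * C (fun i => Fbar x (lamstar i))
      ≤ (∏ i, pstar i) * C (fun i => Fbar x (lam i)) :=
        mul_le_mul_of_nonneg_left hC (prod_nonneg fun i _ ↦ (hpstar i).1)
    _ ≤ (∏ i, p i) * C (fun i => Fbar x (lam i)) := mul_le_mul_of_nonneg_right hprod (hCrange _).1

/-- If `F̄(x; λ)` is increasing and concave in `λ` for each `x ≥ 0` and the common
copula `C_R` is Schur-concave, then `∏ p*ᵢ ≤ ∏ pᵢ` and `λ ≼^w λ*` imply
`Y*_{1:n} ≤_st Y_{1:n}`. -/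
theorem smallest_claim_st_order_parameters {n : ℕ}
    (C : (Fin n → ℝ) → ℝ) (Fbar : ℝ → ℝ → ℝ)
    (p pstar lam lamstar : Fin n → ℝ)
    (hp : ∀ i, p i ∈ Set.Icc (0:ℝ) 1) (hpstar : ∀ i, pstar i ∈ Set.Icc (0:ℝ) 1)
    (hFmono : ∀ x : ℝ, 0 ≤ x → Monotone (Fbar x))
    (hFconc : ∀ x : ℝ, 0 ≤ x → ConcaveOn ℝ Set.univ (Fbar x))
    (hFrange : ∀ x l : ℝ, Fbar x l ∈ Set.Icc (0:ℝ) 1)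
    (hCmono : Monotone C) (hCschur : SchurConcave C)
    (hCrange : ∀ u : Fin n → ℝ, C u ∈ Set.Icc (0:ℝ) 1)
    (hprod : ∏ i, pstar i ≤ ∏ i, p i)
    (hmaj : WeakSupermajorized lam lamstar) :
    ∀ x : ℝ, 0 ≤ x →
      (∏ i, pstar i) * C (fun i => Fbar x (lamstar i)) ≤
        (∏ i, p i) * C (fun i => Fbar x (lam i)) :=
  smallest_claim_st_order_parameters_general C Fbar p pstar lam lamstar hpstar hFmono hFconc hCmono
    hCschur hCrange hprod hmaj
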